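/- Let t ∈ ℝ with t ∉ {−1,0,1}. For nonzero vectors x, y ∈ ℝ³, one has p_t(x,y) = 0 if and only if there exist nonzero real scalars λ, μ and a pair (u,v) in the list Z_t = {((1,1,1),(1,1,1)), ((1,1,−1),(1,1,−1)), ((1,−1,1),(1,−1,1)), ((−1,1,1),(−1,1,1)), ((1,t,0),(t,1,0)), ((1,−t,0),(−t,1,0)), ((0,1,t),(0,t,1)), ((0,1,−t),(0,−t,1)), ((t,0,1),(1,0,t)), ((−t,0,1),(1,0,−t))} such that x = λu and y = μv. -/

import Mathlib

/-!
For fixed `x`, `p_t(x, ·)` is the quadratic form of `M = D - s xxᵀ` with `s = t⁴ - t² + 1` and `D`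
a diagonal matrix, positive for `x ≠ 0`. Lagrange's identity for the `D`-weighted inner product
gives `det D · p_t(x, y) = det M · ∑ Dᵢ yᵢ² + s ∑ₖ Dₖ (x × Dy)ₖ²`, and
`det M = (t² - 1)² E(t², x₁², x₂², x₃²)` for a cyclic cubic `E` that is nonnegative on the closed
positive octant, as one sees by shifting all variables by the smallest one. So `p_t(x, y) = 0`
forces `det M = 0` and `Dy ∥ x`. The zeros of `E` in the octant are the rays `a = b = c` and
`c = 0, b = t²a` (with its cyclic shifts); their square roots are the ten `x` of the list. Each
listed pair `(u, v)` is itself a zero, so `Dy ∥ u ∥ Dv`, whence `y ∥ v`.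
-/

/-- The biquadratic form `p_t(x, y) = yᵀ Φ_t(xxᵀ) y`. -/
def pform (t : ℝ) (x y : Fin 3 → ℝ) : ℝ :=
  ((t^2-1)^2 * x 0^2 + x 1^2 + t^4 * x 2^2) * y 0^2 +
  ((t^2-1)^2 * x 1^2 + x 2^2 + t^4 * x 0^2) * y 1^2 +
  ((t^2-1)^2 * x 2^2 + x 0^2 + t^4 * x 1^2) * y 2^2 -
  2 * (t^4-t^2+1) * (x 0 * x 1 * y 0 * y 1 + x 0 * x 2 * y 0 * y 2 + x 1 * x 2 * y 1 * y 2)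

/-- The ten pairs of vectors giving the zeros of `p_t` in `ℙ² × ℙ²`. -/
def Zlist (t : ℝ) : List ((Fin 3 → ℝ) × (Fin 3 → ℝ)) :=
  [(![1, 1, 1], ![1, 1, 1]), (![1, 1, -1], ![1, 1, -1]),
   (![1, -1, 1], ![1, -1, 1]), (![-1, 1, 1], ![-1, 1, 1]),
   (![1, t, 0], ![t, 1, 0]), (![1, -t, 0], ![-t, 1, 0]),
   (![0, 1, t], ![0, t, 1]), (![0, 1, -t], ![0, -t, 1]),
   (![t, 0, 1], ![1, 0, t]), (![-t, 0, 1], ![1, 0, -t])]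

open Matrix

def cyclicCubic (u a b c : ℝ) : ℝ :=
  u^2 * (a^3 + b^3 + c^3) + (1 - 2*u^3) * (a*b^2 + b*c^2 + c*a^2)
    + (u^4 - 2*u) * (a^2*b + b^2*c + c^2*a) - 3 * (u^4 - 2*u^3 + u^2 - 2*u + 1) * (a*b*c)

namespace cyclicCubic

variable {u a b c : ℝ}

theorem rotate (u a b c : ℝ) : cyclicCubic u a b c = cyclicCubic u b c a := by
  unfold cyclicCubic; ring

theorem add_add (u c p q : ℝ) :
    cyclicCubic u (c + p) (c + q) c =
      (u^2 - u + 1)^2 * (p^2 - p*q + q^2) * c + (q - u*p)^2 * (p + u^2*q) := by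
  unfold cyclicCubic; ring

theorem nonneg_of_le (hc : 0 ≤ c) (hca : c ≤ a) (hcb : c ≤ b) : 0 ≤ cyclicCubic u a b c := by
  obtain ⟨p, hp, rfl⟩ : ∃ p, 0 ≤ p ∧ a = c + p := ⟨a - c, by linarith, by ring⟩
  obtain ⟨q, hq, rfl⟩ : ∃ q, 0 ≤ q ∧ b = c + q := ⟨b - c, by linarith, by ring⟩
  rw [add_add]
  have : 0 ≤ p^2 - p*q + q^2 := by nlinarith [sq_nonneg (p - q)]
  positivity

theorem eq_zero_cases_of_le (hu : u ≠ 0) (hc : 0 ≤ c) (hca : c ≤ a) (hcb : c ≤ b)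
    (h : cyclicCubic u a b c = 0) : (a = c ∧ b = c) ∨ (c = 0 ∧ b = u * a) := by
  obtain ⟨p, hp, rfl⟩ : ∃ p, 0 ≤ p ∧ a = c + p := ⟨a - c, by linarith, by ring⟩
  obtain ⟨q, hq, rfl⟩ : ∃ q, 0 ≤ q ∧ b = c + q := ⟨b - c, by linarith, by ring⟩
  rw [add_add] at h
  have hpq : 0 ≤ p^2 - p*q + q^2 := by nlinarith [sq_nonneg (p - q)]
  have hu' : 0 < u^2 - u + 1 := by nlinarith [sq_nonneg (u - 1/2)]
  obtain ⟨h₁, h₂⟩ := (add_eq_zero_iff_of_nonneg (by positivity) (by positivity)).1 h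
  rcases mul_eq_zero.1 h₁ with h₁ | rfl
  · have hpq0 := (mul_eq_zero.1 h₁).resolve_left (pow_ne_zero 2 hu'.ne')
    have hp0 : p ^ 2 = 0 := by nlinarith [sq_nonneg (p - q), sq_nonneg q]
    have hq0 : q ^ 2 = 0 := by nlinarith [sq_nonneg (p - q), sq_nonneg p]
    left
    simp [pow_eq_zero_iff two_ne_zero |>.1 hp0, pow_eq_zero_iff two_ne_zero |>.1 hq0]
  · right
    refine ⟨rfl, ?_⟩
    rcases mul_eq_zero.1 h₂ with h₂ | h₂
    · linear_combination (pow_eq_zero_iff two_ne_zero).1 h₂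
    · have huq : u ^ 2 * q = 0 := by nlinarith [mul_nonneg (sq_nonneg u) hq]
      have hq0 := (mul_eq_zero.1 huq).resolve_left (pow_ne_zero 2 hu)
      have hp0 : p = 0 := by linarith
      simp [hp0, hq0]

theorem nonneg (ha : 0 ≤ a) (hb : 0 ≤ b) (hc : 0 ≤ c) : 0 ≤ cyclicCubic u a b c := by
  rcases le_total c a with hca | hac <;> rcases le_total c b with hcb | hbc
  · exact nonneg_of_le hc hca hcb
  · rw [rotate u a b c, rotate u b c a]; exact nonneg_of_le hb hbc (hbc.trans hca)
  · rw [rotate u a b c]; exact nonneg_of_le ha (hac.trans hcb) hac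
  · rcases le_total a b with hab | hba
    · rw [rotate u a b c]; exact nonneg_of_le ha hab hac
    · rw [rotate u a b c, rotate u b c a]; exact nonneg_of_le hb hbc hba

theorem eq_zero_cases (hu : u ≠ 0) (ha : 0 ≤ a) (hb : 0 ≤ b) (hc : 0 ≤ c)
    (h : cyclicCubic u a b c = 0) :
    (a = b ∧ b = c) ∨ (c = 0 ∧ b = u * a) ∨ (a = 0 ∧ c = u * b) ∨ (b = 0 ∧ a = u * c) := by
  have ha' : cyclicCubic u b c a = 0 := rotate u a b c ▸ h
  have hb' : cyclicCubic u c a b = 0 := rotate u b c a ▸ ha'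
  rcases le_total c a with hca | hac <;> rcases le_total c b with hcb | hbc
  · rcases eq_zero_cases_of_le hu hc hca hcb h with ⟨rfl, rfl⟩ | h <;> tauto
  · rcases eq_zero_cases_of_le hu hb hbc (hbc.trans hca) hb' with ⟨rfl, rfl⟩ | h <;> tauto
  · rcases eq_zero_cases_of_le hu ha (hac.trans hcb) hac ha' with ⟨rfl, rfl⟩ | h <;> tauto
  · rcases le_total a b with hab | hba
    · rcases eq_zero_cases_of_le hu ha hab hac ha' with ⟨rfl, rfl⟩ | h <;> tauto
    · rcases eq_zero_cases_of_le hu hb hbc hba hb' with ⟨rfl, rfl⟩ | h <;> tauto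

end cyclicCubic

section CrossProduct

theorem mul_cross_mul {R : Type*} [CommRing R] (d v w : Fin 3 → R) :
    (d * v) ⨯₃ (d * w) = ![d 1 * d 2, d 2 * d 0, d 0 * d 1] * v ⨯₃ w := by
  ext i
  fin_cases i <;> simp only [cross_apply, Pi.mul_apply, Fin.isValue, Fin.zero_eta, Fin.mk_one,
    Fin.reduceFinMk, cons_val_zero, cons_val_one, cons_val] <;> ring

variable {F : Type*} [Field F] {u v w : Fin 3 → F}

theorem exists_eq_smul_of_cross_eq_zero (hv : v ≠ 0) (h : v ⨯₃ w = 0) : ∃ c : F, w = c • v := by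
  by_contra! hw
  exact crossProduct_ne_zero_iff_linearIndependent.2
    ((LinearIndependent.pair_iff' hv).2 fun c => (hw c).symm) h

theorem cross_eq_zero_of_cross_eq_zero (hu : u ≠ 0) (hv : u ⨯₃ v = 0) (hw : u ⨯₃ w = 0) :
    v ⨯₃ w = 0 := by
  obtain ⟨a, rfl⟩ := exists_eq_smul_of_cross_eq_zero hu hv
  obtain ⟨b, rfl⟩ := exists_eq_smul_of_cross_eq_zero hu hw
  simp [cross_self]

theorem cross_eq_zero_of_mul_cross_mul_eq_zero {d : Fin 3 → F} (hd : ∀ i, d i ≠ 0)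
    (h : (d * v) ⨯₃ (d * w) = 0) : v ⨯₃ w = 0 := by
  rw [mul_cross_mul] at h
  ext i
  have := congrFun h i
  fin_cases i <;> simpa [hd] using this

end CrossProduct

/-- Lagrange's identity for the `d`-weighted inner product, combined with the matrix
determinant lemma `det (diagonal d - s xxᵀ) = ∏ dᵢ - s ∑ᵢ xᵢ² ∏_{j ≠ i} dⱼ`. -/
theorem prod_mul_dotProduct_mulVec {R : Type*} [CommRing R] (s : R) (d x y : Fin 3 → R) :
    d 0 * d 1 * d 2 * (y ⬝ᵥ ((diagonal d - s • vecMulVec x x) *ᵥ y)) =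
      (diagonal d - s • vecMulVec x x).det * ∑ i, d i * y i ^ 2
        + s * ∑ i, d i * (x ⨯₃ (d * y)) i ^ 2 := by
  simp only [dotProduct, mulVec, diagonal, vecMulVec, smul_of, Matrix.sub_apply, of_apply,
    Pi.smul_apply, smul_eq_mul, Fin.sum_univ_three, det_fin_three, of_sub_of, Pi.sub_apply,
    cross_apply, Pi.mul_apply, Fin.isValue, cons_val_zero, cons_val_one, cons_val, Fin.reduceEq,
    ↓reduceIte]
  ring

def pformDiag (t : ℝ) (x : Fin 3 → ℝ) : Fin 3 → ℝ :=
  ![(2*t^4 - 3*t^2 + 2) * x 0^2 + x 1^2 + t^4 * x 2^2,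
    (2*t^4 - 3*t^2 + 2) * x 1^2 + x 2^2 + t^4 * x 0^2,
    (2*t^4 - 3*t^2 + 2) * x 2^2 + x 0^2 + t^4 * x 1^2]

/-- `Φ_t(xxᵀ)` in the notation of the paper. -/
def pformMatrix (t : ℝ) (x : Fin 3 → ℝ) : Matrix (Fin 3) (Fin 3) ℝ :=
  diagonal (pformDiag t x) - (t^4 - t^2 + 1) • vecMulVec x x

theorem pform_eq_dotProduct_mulVec (t : ℝ) (x y : Fin 3 → ℝ) :
    pform t x y = y ⬝ᵥ (pformMatrix t x *ᵥ y) := by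
  simp only [pform, pformMatrix, pformDiag, dotProduct, mulVec, diagonal, vecMulVec, smul_of,
    Matrix.sub_apply, of_apply, Pi.smul_apply, smul_eq_mul, Fin.sum_univ_three, Fin.isValue,
    cons_val_zero, cons_val_one, cons_val, Fin.reduceEq, ↓reduceIte]
  ring

theorem det_pformMatrix (t : ℝ) (x : Fin 3 → ℝ) :
    (pformMatrix t x).det = (t^2 - 1)^2 * cyclicCubic (t^2) (x 0 ^ 2) (x 1 ^ 2) (x 2 ^ 2) := by
  simp only [pformMatrix, pformDiag, cyclicCubic, diagonal, vecMulVec, smul_of, of_sub_of,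
    det_fin_three, of_apply, Pi.sub_apply, Pi.smul_apply, smul_eq_mul, Fin.isValue,
    cons_val_zero, cons_val_one, cons_val, Fin.reduceEq, ↓reduceIte]
  ring

theorem pformDiag_pos {t : ℝ} (ht : t ≠ 0) {x : Fin 3 → ℝ} (hx : x ≠ 0) (i : Fin 3) :
    0 < pformDiag t x i := by
  obtain ⟨j, hj⟩ := Function.ne_iff.1 hx
  have : 0 < 2*t^4 - 3*t^2 + 2 := by nlinarith [sq_nonneg (t^2 - 1)]
  fin_cases i <;> fin_cases j <;>
    simp only [pformDiag, Pi.zero_apply, Fin.isValue, Fin.zero_eta, Fin.mk_one, Fin.reduceFinMk,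
      cons_val_zero, cons_val_one, cons_val] at hj ⊢ <;>
    positivity

theorem det_pformMatrix_eq_zero_and_cross_eq_zero_of_pform_eq_zero {t : ℝ} (ht : t ≠ 0)
    {x y : Fin 3 → ℝ} (hx : x ≠ 0) (hy : y ≠ 0) (h : pform t x y = 0) :
    (pformMatrix t x).det = 0 ∧ x ⨯₃ (pformDiag t x * y) = 0 := by
  have hd := pformDiag_pos ht hx
  have hs : 0 < t^4 - t^2 + 1 := by nlinarith [sq_nonneg (t^2 - 1)]
  have hdet : 0 ≤ (pformMatrix t x).det := by
    rw [det_pformMatrix]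
    exact mul_nonneg (sq_nonneg _) (cyclicCubic.nonneg (sq_nonneg _) (sq_nonneg _) (sq_nonneg _))
  have hQ : 0 < ∑ i, pformDiag t x i * y i ^ 2 := by
    obtain ⟨j, hj⟩ := Function.ne_iff.1 hy
    exact Finset.sum_pos' (fun i _ => by have := hd i; positivity)
      ⟨j, Finset.mem_univ j, by have := hd j; simp only [Pi.zero_apply] at hj; positivity⟩
  have key := prod_mul_dotProduct_mulVec (t^4 - t^2 + 1) (pformDiag t x) x y
  rw [← pformMatrix, ← pform_eq_dotProduct_mulVec, h, mul_zero] at key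
  obtain ⟨h₁, h₂⟩ := (add_eq_zero_iff_of_nonneg (mul_nonneg hdet hQ.le)
    (mul_nonneg hs.le (Finset.sum_nonneg fun i _ => mul_nonneg (hd i).le (sq_nonneg _)))).1 key.symm
  refine ⟨(mul_eq_zero.1 h₁).resolve_right hQ.ne', ?_⟩
  rw [mul_eq_zero, Finset.sum_eq_zero_iff_of_nonneg fun i _ =>
    mul_nonneg (hd i).le (sq_nonneg _)] at h₂
  ext i
  simpa [(hd i).ne'] using h₂.resolve_left hs.ne' i (Finset.mem_univ i)

theorem pform_smul_left (t l : ℝ) (x y : Fin 3 → ℝ) : pform t (l • x) y = l ^ 2 * pform t x y := by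
  simp only [pform, Pi.smul_apply, smul_eq_mul]; ring

theorem pform_smul_right (t m : ℝ) (x y : Fin 3 → ℝ) :
    pform t x (m • y) = m ^ 2 * pform t x y := by
  simp only [pform, Pi.smul_apply, smul_eq_mul]; ring

theorem pform_eq_zero_of_mem_Zlist {t : ℝ} {uv : (Fin 3 → ℝ) × (Fin 3 → ℝ)} (h : uv ∈ Zlist t) :
    pform t uv.1 uv.2 = 0 := by
  simp only [Zlist, List.mem_cons, List.not_mem_nil, or_false] at h
  rcases h with rfl | rfl | rfl | rfl | rfl | rfl | rfl | rfl | rfl | rfl <;>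
    simp only [pform, Fin.isValue, cons_val_zero, cons_val_one, cons_val] <;> ring

theorem snd_ne_zero_of_mem_Zlist {t : ℝ} {uv : (Fin 3 → ℝ) × (Fin 3 → ℝ)} (h : uv ∈ Zlist t) :
    uv.2 ≠ 0 := by
  simp only [Zlist, List.mem_cons, List.not_mem_nil, or_false] at h
  rcases h with rfl | rfl | rfl | rfl | rfl | rfl | rfl | rfl | rfl | rfl <;> simp

theorem exists_mem_Zlist_of_det_pformMatrix_eq_zero {t : ℝ} (ht0 : t ≠ 0) (ht1 : t ^ 2 ≠ 1)
    {x : Fin 3 → ℝ} (h : (pformMatrix t x).det = 0) : ∃ uv ∈ Zlist t, ∃ l : ℝ, x = l • uv.1 := by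
  rw [det_pformMatrix, mul_eq_zero, or_iff_right (pow_ne_zero 2 (sub_ne_zero.2 ht1))] at h
  have hsq {a b : ℝ} (h : a ^ 2 = t ^ 2 * b ^ 2) : a = t * b ∨ a = -(t * b) :=
    sq_eq_sq_iff_eq_or_eq_neg.1 (by rw [h, mul_pow])
  rcases cyclicCubic.eq_zero_cases (pow_ne_zero 2 ht0) (sq_nonneg _) (sq_nonneg _) (sq_nonneg _) h
    with ⟨h01, h12⟩ | ⟨h2, h1⟩ | ⟨h0, h2⟩ | ⟨h1, h0⟩
  · rcases sq_eq_sq_iff_eq_or_eq_neg.1 h01.symm with h1 | h1 <;>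
      rcases sq_eq_sq_iff_eq_or_eq_neg.1 (h01.trans h12).symm with h2 | h2
    · exact ⟨(![1, 1, 1], ![1, 1, 1]), by simp [Zlist], x 0,
        by ext i; fin_cases i <;> simp [h1, h2]⟩
    · exact ⟨(![1, 1, -1], ![1, 1, -1]), by simp [Zlist], x 0,
        by ext i; fin_cases i <;> simp [h1, h2]⟩
    · exact ⟨(![1, -1, 1], ![1, -1, 1]), by simp [Zlist], x 0,
        by ext i; fin_cases i <;> simp [h1, h2]⟩
    · exact ⟨(![-1, 1, 1], ![-1, 1, 1]), by simp [Zlist], -x 0,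
        by ext i; fin_cases i <;> simp [h1, h2]⟩
  · rw [pow_eq_zero_iff two_ne_zero] at h2
    rcases hsq h1 with h1 | h1
    · exact ⟨(![1, t, 0], ![t, 1, 0]), by simp [Zlist], x 0,
        by ext i; fin_cases i <;> simp [h1, h2, mul_comm]⟩
    · exact ⟨(![1, -t, 0], ![-t, 1, 0]), by simp [Zlist], x 0,
        by ext i; fin_cases i <;> simp [h1, h2, mul_comm]⟩
  · rw [pow_eq_zero_iff two_ne_zero] at h0
    rcases hsq h2 with h2 | h2
    · exact ⟨(![0, 1, t], ![0, t, 1]), by simp [Zlist], x 1,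
        by ext i; fin_cases i <;> simp [h0, h2, mul_comm]⟩
    · exact ⟨(![0, 1, -t], ![0, -t, 1]), by simp [Zlist], x 1,
        by ext i; fin_cases i <;> simp [h0, h2, mul_comm]⟩
  · rw [pow_eq_zero_iff two_ne_zero] at h1
    rcases hsq h0 with h0 | h0
    · exact ⟨(![t, 0, 1], ![1, 0, t]), by simp [Zlist], x 2,
        by ext i; fin_cases i <;> simp [h0, h1, mul_comm]⟩
    · exact ⟨(![-t, 0, 1], ![1, 0, -t]), by simp [Zlist], x 2,
        by ext i; fin_cases i <;> simp [h0, h1, mul_comm]⟩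

/-- For `t ∉ {-1, 0, 1}` and nonzero `x, y ∈ ℝ³`, `p_t(x, y) = 0` iff `(x, y)` is, up to
independent nonzero scalings, one of the ten pairs in the list `Z_t`. -/
theorem pform_zero_iff (t : ℝ) (ht : t ∉ ({-1, 0, 1} : Set ℝ))
    (x y : Fin 3 → ℝ) (hx : x ≠ 0) (hy : y ≠ 0) :
    pform t x y = 0 ↔
      ∃ (l m : ℝ), l ≠ 0 ∧ m ≠ 0 ∧ ∃ uv ∈ Zlist t, x = l • uv.1 ∧ y = m • uv.2 := by
  simp only [Set.mem_insert_iff, Set.mem_singleton_iff, not_or] at ht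
  obtain ⟨htn, ht0, htp⟩ := ht
  have ht1 : t ^ 2 ≠ 1 := by rw [Ne, sq_eq_one_iff]; tauto
  constructor
  · intro hp
    obtain ⟨uv, huv, l, rfl⟩ := exists_mem_Zlist_of_det_pformMatrix_eq_zero ht0 ht1
      (det_pformMatrix_eq_zero_and_cross_eq_zero_of_pform_eq_zero ht0 hx hy hp).1
    obtain ⟨hl, hu⟩ := smul_ne_zero_iff.1 hx
    have hv := snd_ne_zero_of_mem_Zlist huv
    have hpu : pform t uv.1 y = 0 := by
      rwa [pform_smul_left, mul_eq_zero, or_iff_right (pow_ne_zero 2 hl)] at hp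
    have hker_y := (det_pformMatrix_eq_zero_and_cross_eq_zero_of_pform_eq_zero ht0 hu hy hpu).2
    have hker_v := (det_pformMatrix_eq_zero_and_cross_eq_zero_of_pform_eq_zero ht0 hu hv
      (pform_eq_zero_of_mem_Zlist huv)).2
    obtain ⟨m, rfl⟩ := exists_eq_smul_of_cross_eq_zero hv
      (cross_eq_zero_of_mul_cross_mul_eq_zero (fun i => (pformDiag_pos ht0 hu i).ne')
        (cross_eq_zero_of_cross_eq_zero hu hker_v hker_y))
    exact ⟨l, m, hl, left_ne_zero_of_smul hy, uv, huv, rfl, rfl⟩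
  · rintro ⟨l, m, -, -, uv, huv, rfl, rfl⟩
    rw [pform_smul_left, pform_smul_right, pform_eq_zero_of_mem_Zlist huv, mul_zero, mul_zero]
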